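/- Let ρ be a two-rebit state lacking tomographically-local entanglement, i.e., suppose Π_TL(ρ) = Σ_{k} p_k • (A_k ⊗ₖ B_k) for some n : ℕ, weights p_k ≥ 0 with Σ p_k = 1, and real symmetric positive semidefinite trace-one 2×2 matrices A_k, B_k. Then for all real symmetric 2×2 matrices E and F, trace(ρ * (E ⊗ₖ F)) = Σ_k p_k · trace(A_k * E) · trace(B_k * F). Consequently, for arbitrary local real measurements, the resulting correlations admit a local hidden variable model, so ρ cannot violate any Bell inequality. -/

import Mathlib

/-!
Decompose `ρ = Π_TL(ρ) + c • Y₄`. Since `y` is antisymmetric, `trace (y * E) = 0` for every symmetric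
`E`, so the `Y₄ = -(y ⊗ₖ y)` component is invisible to product effects `E ⊗ₖ F`; on the separable
part `Π_TL(ρ) = ∑ pₖ • (Aₖ ⊗ₖ Bₖ)` the trace of `(Aₖ ⊗ₖ Bₖ) * (E ⊗ₖ F)` factorizes.
-/

open Matrix Kronecker

/-- The real 2×2 matrix with rows (0, −1) and (1, 0). -/
noncomputable def y : Matrix (Fin 2) (Fin 2) ℝ := !![0, -1; 1, 0]

/-- The real 4×4 matrix representing σ_y ⊗ σ_y. -/
noncomputable def Y₄ : Matrix (Fin 2 × Fin 2) (Fin 2 × Fin 2) ℝ := -(y ⊗ₖ y)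

/-- A two-rebit state: a real symmetric positive semidefinite 4×4 matrix of trace 1. -/
def IsTwoRebitState (ρ : Matrix (Fin 2 × Fin 2) (Fin 2 × Fin 2) ℝ) : Prop :=
  ρ.IsSymm ∧ ρ.PosSemidef ∧ ρ.trace = 1

/-- The tomographically local projection Π_TL on two-rebit matrices. -/
noncomputable def PiTL (ρ : Matrix (Fin 2 × Fin 2) (Fin 2 × Fin 2) ℝ) :
    Matrix (Fin 2 × Fin 2) (Fin 2 × Fin 2) ℝ :=
  ρ - ((1 / 4 : ℝ) * (ρ * Y₄).trace) • Y₄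

namespace Matrix

theorem trace_mul_eq_zero_of_transpose_eq_neg_of_isSymm {R : Type*} [CommRing R]
    [IsAddTorsionFree R] {n : Type*} [Fintype n] {S E : Matrix n n R} (hS : Sᵀ = -S)
    (hE : E.IsSymm) :
    (S * E).trace = 0 := by
  have h : (S * E).trace = -(S * E).trace := by
    calc (S * E).trace = (S * E)ᵀ.trace := (trace_transpose _).symm
      _ = (E * -S).trace := by rw [transpose_mul, hS, hE.eq]
      _ = -(S * E).trace := by rw [mul_neg, trace_neg, trace_mul_comm]
  exact self_eq_neg.mp h

theorem trace_kronecker_mul_kronecker {R : Type*} [CommSemiring R] {m n : Type*}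
    [Fintype m] [Fintype n]
    (A E : Matrix m m R) (B F : Matrix n n R) :
    ((A ⊗ₖ B) * (E ⊗ₖ F)).trace = (A * E).trace * (B * F).trace := by
  rw [← mul_kronecker_mul, trace_kronecker]

end Matrix

theorem y_transpose : yᵀ = -y := by
  ext i j
  fin_cases i <;> fin_cases j <;> simp [y]

theorem trace_Y₄_mul_kronecker {E : Matrix (Fin 2) (Fin 2) ℝ} (hE : E.IsSymm)
    (F : Matrix (Fin 2) (Fin 2) ℝ) : (Y₄ * (E ⊗ₖ F)).trace = 0 := by
  rw [Y₄, neg_mul, trace_neg, trace_kronecker_mul_kronecker,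
    trace_mul_eq_zero_of_transpose_eq_neg_of_isSymm y_transpose hE, zero_mul, neg_zero]

theorem trace_PiTL_mul_kronecker (ρ : Matrix (Fin 2 × Fin 2) (Fin 2 × Fin 2) ℝ)
    {E : Matrix (Fin 2) (Fin 2) ℝ} (hE : E.IsSymm) (F : Matrix (Fin 2) (Fin 2) ℝ) :
    (PiTL ρ * (E ⊗ₖ F)).trace = (ρ * (E ⊗ₖ F)).trace := by
  rw [PiTL, sub_mul, trace_sub, smul_mul, trace_smul, trace_Y₄_mul_kronecker hE, smul_zero,
    sub_zero]

theorem stmt11_general (ρ : Matrix (Fin 2 × Fin 2) (Fin 2 × Fin 2) ℝ)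
    (n : ℕ) (p : Fin n → ℝ) (A B : Fin n → Matrix (Fin 2) (Fin 2) ℝ)
    (hdec : PiTL ρ = ∑ k, p k • (A k ⊗ₖ B k)) :
    ∀ E F : Matrix (Fin 2) (Fin 2) ℝ, E.IsSymm → F.IsSymm →
      (ρ * (E ⊗ₖ F)).trace = ∑ k, p k * (A k * E).trace * (B k * F).trace := by
  intro E F hE _
  rw [← trace_PiTL_mul_kronecker ρ hE, hdec, Finset.sum_mul, trace_sum]
  refine Finset.sum_congr rfl fun k _ => ?_
  rw [smul_mul, trace_smul, trace_kronecker_mul_kronecker, smul_eq_mul, mul_assoc]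

/-- **Proposition 9 of the paper (in real quantum theory):
tomographically-nonlocal entanglement is useless for Bell nonlocality.**
If the tomographically-local projection of a two-rebit state is separable,
then its correlations under arbitrary product effects factorize through a
local hidden variable model. -/
theorem stmt11 (ρ : Matrix (Fin 2 × Fin 2) (Fin 2 × Fin 2) ℝ)
    (hρ : IsTwoRebitState ρ)
    (n : ℕ) (p : Fin n → ℝ) (A B : Fin n → Matrix (Fin 2) (Fin 2) ℝ)
    (hp : ∀ k, 0 ≤ p k) (hps : (∑ k, p k) = 1)
    (hA : ∀ k, (A k).IsSymm ∧ (A k).PosSemidef ∧ (A k).trace = 1)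
    (hB : ∀ k, (B k).IsSymm ∧ (B k).PosSemidef ∧ (B k).trace = 1)
    (hdec : PiTL ρ = ∑ k, p k • (A k ⊗ₖ B k)) :
    ∀ E F : Matrix (Fin 2) (Fin 2) ℝ, E.IsSymm → F.IsSymm →
      (ρ * (E ⊗ₖ F)).trace = ∑ k, p k * (A k * E).trace * (B k * F).trace :=
  stmt11_general ρ n p A B hdec
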